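/- Let $R$ be a stopping time for a filtration $\mathbb{H}$ and suppose there is a subfiltration $\mathbb{G}$ in which $R$ is totally inaccessible with compensator $\int_0^t \lambda_s\,dc(s)$, where $c$ is deterministic, continuous, and nondecreasing. Let $F(t)=P(R\le t)$ be the law of $R$. Then $dF \ll dc$. In particular, if $c(s)=s$ then $F$ is absolutely continuous with respect to Lebesgue measure, and if $dc$ is singular with respect to Lebesgue measure then $F$ is singular. -/

import Mathlib

open MeasureTheory ProbabilityTheory Set Filter Function
open scoped ENNReal NNReal Topology

noncomputable section

variable {Ω : Type*}

/-- A family of sub-σ-algebras of `m` indexed by time, monotone: a filtration. -/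
def IsFiltrationFam [m : MeasurableSpace Ω] (G : ℝ → MeasurableSpace Ω) : Prop :=
  Monotone G ∧ ∀ t, G t ≤ m

/-- `R` (with values in `[0,∞]`) is a stopping time for the family `G`. -/
def IsStoppingTimeE [MeasurableSpace Ω] (G : ℝ → MeasurableSpace Ω) (R : Ω → ℝ≥0∞) : Prop :=
  ∀ t : ℝ, MeasurableSet[G t] {ω | R ω ≤ ENNReal.ofReal t}

/-- A real-valued process adapted to the family `G`. -/
def AdaptedFam [MeasurableSpace Ω] (G : ℝ → MeasurableSpace Ω) (X : ℝ → Ω → ℝ) : Prop :=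
  ∀ t, Measurable[G t] (X t)

/-- Martingale (on nonnegative times) for the family `G` under `P`. -/
def IsMartingaleFam [MeasurableSpace Ω] (P : Measure Ω) (G : ℝ → MeasurableSpace Ω)
    (X : ℝ → Ω → ℝ) : Prop :=
  AdaptedFam G X ∧ (∀ t, Integrable (X t) P) ∧
    ∀ s t : ℝ, 0 ≤ s → s ≤ t → P[X t | G s] =ᵐ[P] X s

/-- The one-jump indicator process `1_{t ≥ R}` of a random time `R`. -/
def stInd [MeasurableSpace Ω] (R : Ω → ℝ≥0∞) : ℝ → Ω → ℝ :=
  fun t => {ω | R ω ≤ ENNReal.ofReal t}.indicator (fun _ => (1 : ℝ))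

/-- A predictable (announceable) stopping time for the family `G`. -/
def IsPredictableST [MeasurableSpace Ω] (G : ℝ → MeasurableSpace Ω) (T : Ω → ℝ≥0∞) : Prop :=
  IsStoppingTimeE G T ∧ ∃ Tn : ℕ → Ω → ℝ≥0∞, (∀ n, IsStoppingTimeE G (Tn n)) ∧
    ∀ ω, Monotone (fun n => Tn n ω) ∧ Tendsto (fun n => Tn n ω) atTop (nhds (T ω)) ∧
      ∀ n, 0 < T ω → Tn n ω < T ω

/-- A totally inaccessible stopping time: it avoids every predictable stopping time. -/
def IsTotallyInaccessible [MeasurableSpace Ω] (P : Measure Ω) (G : ℝ → MeasurableSpace Ω)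
    (R : Ω → ℝ≥0∞) : Prop :=
  IsStoppingTimeE G R ∧ ∀ T, IsPredictableST G T → P {ω | R ω = T ω ∧ R ω < ⊤} = 0

/-- The stopping time `R` has an absolutely continuous compensator:
`1_{t ≥ R} - ∫_0^t λ_s ds` is a martingale for some nonnegative adapted `λ`. -/
def HasACCompensator [MeasurableSpace Ω] (P : Measure Ω) (G : ℝ → MeasurableSpace Ω)
    (R : Ω → ℝ≥0∞) : Prop :=
  ∃ lam : ℝ → Ω → ℝ, (∀ s ω, 0 ≤ lam s ω) ∧ AdaptedFam G lam ∧
    IsMartingaleFam P G (fun t ω => stInd R t ω - ∫ s in Ioc (0:ℝ) t, lam s ω)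

/-!
Write `g t = ∫_{(0,t]} λ dμ` for the compensator. The martingale property gives, for `0 ≤ s ≤ t`
and `A ∈ 𝔾_s`, `P(A ∩ {s < R ≤ t}) = E[1_A (g t - g s)]`; in particular `g` is a nonnegative
submartingale. Cover a `μ`-null set `A ⊆ (0, b]` by open sets `U_j` decreasing to a `μ`-null set,
and approximate each `U_j` from inside by finitely many dyadic cells of one level. Summing the
identity over these cells, each restricted to the event that `g` has stayed `≤ M` at the grid
points up to the end of the cell, gives a random variable bounded pathwise by
`ρ_ω (U_j ∩ D_ω) ≤ M`, where `ρ_ω = λ(·, ω) dμ` and `D_ω` is the union of the intervals `(0, x]`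
of `ρ_ω`-mass at most `M`; it tends to `0` as `j → ∞` by dominated convergence. The events where
`g` crosses `M`, and the mass of `g b` on them, are small for large `M` by Doob's maximal
inequality and the uniform integrability of `g b`.
Since `g t ω` is a Bochner integral, it is `0` when `λ(·, ω)` is not integrable on `(0, t]`; such
junk values only lower the cell increments, so the pathwise bound survives them. Finally `R ≠ 0`
almost surely, as `R` avoids the predictable time `0`.
-/

def dyadic (N l : ℕ) : ℝ := l / 2 ^ N

def dyadicCell (N l : ℕ) : Set ℝ := Ioc (dyadic N l) (dyadic N (l + 1))

lemma dyadic_nonneg (N l : ℕ) : 0 ≤ dyadic N l := by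
  unfold dyadic; positivity

lemma dyadic_mono (N : ℕ) : Monotone (dyadic N) := fun l l' h => by
  unfold dyadic; gcongr

lemma dyadic_succ_two_mul (N l : ℕ) : dyadic (N + 1) (2 * l) = dyadic N l := by
  unfold dyadic; push_cast; field_simp; ring

lemma dyadic_mul_two_pow (N b : ℕ) : dyadic N (b * 2 ^ N) = b := by
  unfold dyadic; push_cast; field_simp

lemma dyadicCell_eq_union (N l : ℕ) :
    dyadicCell N l = dyadicCell (N + 1) (2 * l) ∪ dyadicCell (N + 1) (2 * l + 1) := by
  rw [dyadicCell, dyadicCell, dyadicCell, Ioc_union_Ioc_eq_Ioc (dyadic_mono _ (by omega))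
    (dyadic_mono _ (by omega)), dyadic_succ_two_mul, show 2 * l + 1 + 1 = 2 * (l + 1) by ring,
    dyadic_succ_two_mul]

lemma pairwise_disjoint_dyadicCell (N : ℕ) : Pairwise (Disjoint on dyadicCell N) := by
  intro l l' hll'
  wlog h : l < l' generalizing l l'
  · exact (this hll'.symm (by omega)).symm
  exact Ioc_disjoint_Ioc_of_le (dyadic_mono N h)

lemma mem_dyadicCell_iff {N l : ℕ} {x : ℝ} :
    x ∈ dyadicCell N l ↔ ⌈x * 2 ^ N⌉₊ = l + 1 := by
  rw [Nat.ceil_eq_iff (by omega), dyadicCell, dyadic, dyadic, mem_Ioc,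
    div_lt_iff₀ (by positivity), le_div_iff₀ (by positivity)]
  push_cast
  simp

lemma exists_dyadicCell_subset {U : Set ℝ} (hU : IsOpen U) {x : ℝ} (hx : x ∈ U) {b : ℕ}
    (hx0 : 0 < x) (hxb : x ≤ b) :
    ∃ N l, l < b * 2 ^ N ∧ x ∈ dyadicCell N l ∧ dyadicCell N l ⊆ U := by
  obtain ⟨ε, hε, hball⟩ := Metric.isOpen_iff.1 hU x hx
  obtain ⟨N, hN⟩ := exists_pow_lt_of_lt_one hε (by norm_num : (1 / 2 : ℝ) < 1)
  rw [one_div_pow] at hN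
  have hceil : 1 ≤ ⌈x * 2 ^ N⌉₊ := Nat.one_le_iff_ne_zero.2 (by positivity)
  have hx_mem : x ∈ dyadicCell N (⌈x * 2 ^ N⌉₊ - 1) := mem_dyadicCell_iff.2 (by omega)
  refine ⟨N, ⌈x * 2 ^ N⌉₊ - 1, ?_, hx_mem, fun y hy => hball ?_⟩
  · have : ⌈x * 2 ^ N⌉₊ ≤ b * 2 ^ N := Nat.ceil_le.2 (by push_cast; gcongr)
    omega
  · have hwidth :
        dyadic N (⌈x * 2 ^ N⌉₊ - 1 + 1) - dyadic N (⌈x * 2 ^ N⌉₊ - 1) = 1 / 2 ^ N := by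
      simp only [dyadic]; push_cast; field_simp; ring
    rw [Metric.mem_ball, Real.dist_eq, abs_lt]
    constructor <;> linarith [hx_mem.1, hx_mem.2, hy.1, hy.2]

open Classical in
def innerCellIdx (U : Set ℝ) (b N : ℕ) : Finset ℕ :=
  {l ∈ Finset.range (b * 2 ^ N) | dyadicCell N l ⊆ U}

def innerCells (U : Set ℝ) (b N : ℕ) : Set ℝ := ⋃ l ∈ innerCellIdx U b N, dyadicCell N l

lemma mem_innerCellIdx {U : Set ℝ} {b N l : ℕ} :
    l ∈ innerCellIdx U b N ↔ l < b * 2 ^ N ∧ dyadicCell N l ⊆ U := by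
  classical
  simp [innerCellIdx]

lemma measurableSet_innerCells (U : Set ℝ) (b N : ℕ) : MeasurableSet (innerCells U b N) :=
  Finset.measurableSet_biUnion _ fun _ _ => measurableSet_Ioc

lemma dyadicCell_subset_Ioc {N l b : ℕ} (h : l < b * 2 ^ N) :
    dyadicCell N l ⊆ Ioc 0 (b : ℝ) :=
  fun _ hx => ⟨(dyadic_nonneg N l).trans_lt hx.1,
    hx.2.trans ((dyadic_mono N (Nat.succ_le_of_lt h)).trans_eq (dyadic_mul_two_pow N b))⟩

lemma innerCells_subset (U : Set ℝ) (b N : ℕ) : innerCells U b N ⊆ U ∩ Ioc 0 (b : ℝ) :=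
  iUnion₂_subset fun _ hl => subset_inter (mem_innerCellIdx.1 hl).2
    (dyadicCell_subset_Ioc (mem_innerCellIdx.1 hl).1)

lemma monotone_innerCells (U : Set ℝ) (b : ℕ) : Monotone (innerCells U b) := by
  refine monotone_nat_of_le_succ fun N x hx => ?_
  simp only [innerCells, mem_iUnion, mem_innerCellIdx] at hx ⊢
  obtain ⟨l, ⟨hlb, hlU⟩, hxl⟩ := hx
  rw [dyadicCell_eq_union] at hxl hlU
  have hb : b * 2 ^ (N + 1) = 2 * (b * 2 ^ N) := by ring
  rcases hxl with hxl | hxl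
  · exact ⟨2 * l, ⟨by omega, subset_union_left.trans hlU⟩, hxl⟩
  · exact ⟨2 * l + 1, ⟨by omega, subset_union_right.trans hlU⟩, hxl⟩

lemma iUnion_innerCells {U : Set ℝ} (hU : IsOpen U) (b : ℕ) :
    ⋃ N, innerCells U b N = U ∩ Ioc 0 (b : ℝ) := by
  refine (iUnion_subset fun N => innerCells_subset U b N).antisymm fun x ⟨hxU, hx0, hxb⟩ => ?_
  obtain ⟨N, l, hlb, hxl, hlU⟩ := exists_dyadicCell_subset hU hxU hx0 hxb
  exact mem_iUnion.2 ⟨N, mem_biUnion (mem_innerCellIdx.2 ⟨hlb, hlU⟩) hxl⟩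

lemma exists_antitone_isOpen_superset {α : Type*} [TopologicalSpace α] [MeasurableSpace α]
    {μ : Measure α} [μ.OuterRegular] {A : Set α} (hA : μ A = 0) :
    ∃ U : ℕ → Set α, Antitone U ∧ (∀ j, IsOpen (U j)) ∧ (∀ j, A ⊆ U j) ∧ μ (⋂ j, U j) = 0 := by
  have hV : ∀ k : ℕ, ∃ V, A ⊆ V ∧ IsOpen V ∧ μ V < (k : ℝ≥0∞)⁻¹ := fun k =>
    A.exists_isOpen_lt_of_lt _ (by simp [hA])
  choose V hAV hV_open hV_lt using hV
  refine ⟨fun j => ⋂ k ≤ j, V k, fun i j hij => biInter_mono (fun k hk => le_trans hk hij)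
    fun _ _ => subset_rfl, fun j => (finite_le_nat j).isOpen_biInter fun k _ => hV_open k,
    fun j => subset_iInter₂ fun k _ => hAV k, ?_⟩
  refine le_antisymm (ge_of_tendsto' ENNReal.tendsto_inv_nat_nhds_zero fun j => ?_) bot_le
  exact (measure_mono (iInter_subset_of_subset j
    (biInter_subset_of_mem (le_refl j) : ⋂ k ≤ j, V k ⊆ V j))).trans
    (hV_lt j).le

lemma exists_measureReal_le_innerCells {ν : Measure ℝ} [IsFiniteMeasure ν] {U A : Set ℝ}
    (hU : IsOpen U) {b : ℕ} (hA : A ⊆ U ∩ Ioc 0 (b : ℝ)) {δ : ℝ} (hδ : 0 < δ) :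
    ∃ N, ν.real A ≤ ν.real (innerCells U b N) + δ := by
  have hlim : Tendsto (fun N => ν.real (innerCells U b N)) atTop
      (𝓝 (ν.real (U ∩ Ioc 0 (b : ℝ)))) := by
    have := tendsto_measure_iUnion_atTop (μ := ν) (monotone_innerCells U b)
    rw [iUnion_innerCells hU] at this
    exact (ENNReal.tendsto_toReal (measure_ne_top _ _)).comp this
  obtain ⟨N, hN⟩ := (hlim.eventually (lt_mem_nhds (sub_lt_self _ hδ))).exists
  exact ⟨N, by linarith [measureReal_mono hA (μ := ν)]⟩

lemma tendsto_measureReal_inter_of_absolutelyContinuous {α : Type*} [MeasurableSpace α]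
    {μ ρ : Measure α} (hρμ : ρ ≪ μ) {D : Set α} (hD : ρ D ≠ ⊤) {U : ℕ → Set α}
    (hU : Antitone U) (hUm : ∀ j, MeasurableSet (U j)) (hU0 : μ (⋂ j, U j) = 0) :
    Tendsto (fun j => ρ.real (U j ∩ D)) atTop (𝓝 0) := by
  have hfin : ρ.restrict D (U 0) ≠ ⊤ := by
    rw [Measure.restrict_apply (hUm 0)]
    exact ne_top_of_le_ne_top hD (measure_mono inter_subset_right)
  have hlim := tendsto_measure_iInter_atTop (μ := ρ.restrict D)
    (fun j => (hUm j).nullMeasurableSet) hU ⟨0, hfin⟩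
  rw [Measure.restrict_apply (.iInter hUm), measure_mono_null inter_subset_left (hρμ hU0)] at hlim
  simpa [Function.comp_def, Measure.restrict_apply (hUm _), measureReal_def] using
    (ENNReal.tendsto_toReal ENNReal.zero_ne_top).comp hlim

lemma nonpos_of_forall_le_measureReal_add_setIntegral [MeasurableSpace Ω] {P : Measure Ω}
    [IsFiniteMeasure P] {f : Ω → ℝ} (hf : Integrable f P) {x : ℝ}
    (hx : ∀ δ > 0, ∃ B : Set Ω, P.real B ≤ δ ∧ x ≤ P.real B + ∫ ω in B, f ω ∂P + δ) :
    x ≤ 0 := by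
  choose B hB using fun n : ℕ => hx (1 / (n + 1)) Nat.one_div_pos_of_nat
  have hB0 : Tendsto (fun n => P.real (B n)) atTop (𝓝 0) :=
    squeeze_zero (fun _ => measureReal_nonneg) (fun n => (hB n).1)
      tendsto_one_div_add_atTop_nhds_zero_nat
  have hPB : Tendsto (P ∘ B) atTop (𝓝 0) := by
    simpa [Function.comp_def, ofReal_measureReal] using ENNReal.tendsto_ofReal hB0
  have hsum := (hB0.add (hf.tendsto_setIntegral_nhds_zero hPB)).add
    tendsto_one_div_add_atTop_nhds_zero_nat
  rw [add_zero, add_zero] at hsum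
  exact ge_of_tendsto' hsum fun n => (hB n).2

-- Only dyadic endpoints are used, so that the union is countable.
def dyadicSublevel (ρ : Measure ℝ) (M : ℝ≥0∞) : Set ℝ :=
  ⋃ x ∈ {x ∈ range (uncurry dyadic) | ρ (Ioc 0 x) ≤ M}, Ioc 0 x

lemma countable_dyadicSublevel_index (ρ : Measure ℝ) (M : ℝ≥0∞) :
    {x ∈ range (uncurry dyadic) | ρ (Ioc 0 x) ≤ M}.Countable :=
  (countable_range _).mono (sep_subset _ _)

lemma measurableSet_dyadicSublevel (ρ : Measure ℝ) (M : ℝ≥0∞) :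
    MeasurableSet (dyadicSublevel ρ M) :=
  .biUnion (countable_dyadicSublevel_index ρ M) fun _ _ => measurableSet_Ioc

lemma measure_dyadicSublevel_le (ρ : Measure ℝ) (M : ℝ≥0∞) :
    ρ (dyadicSublevel ρ M) ≤ M := by
  rw [dyadicSublevel, measure_biUnion_eq_iSup (countable_dyadicSublevel_index ρ M)]
  · exact iSup₂_le fun x hx => hx.2
  intro x hx y hy
  rcases le_total x y with hxy | hyx
  · exact ⟨y, hy, Ioc_subset_Ioc_right hxy, subset_rfl⟩
  · exact ⟨x, hx, subset_rfl, Ioc_subset_Ioc_right hyx⟩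

lemma Ioc_subset_dyadicSublevel {ρ : Measure ℝ} {M : ℝ≥0∞} {N l : ℕ}
    (h : ρ (Ioc 0 (dyadic N l)) ≤ M) : Ioc 0 (dyadic N l) ⊆ dyadicSublevel ρ M :=
  subset_biUnion_of_mem (u := fun x => Ioc 0 x) ⟨⟨(N, l), rfl⟩, h⟩

lemma setIntegral_Ioc_sub_setIntegral_Ioc {μ : Measure ℝ} {f : ℝ → ℝ} {s t : ℝ}
    (hs : 0 ≤ s) (hst : s ≤ t) (hf : IntegrableOn f (Ioc 0 t) μ) :
    ∫ u in Ioc 0 t, f u ∂μ - ∫ u in Ioc 0 s, f u ∂μ = ∫ u in Ioc s t, f u ∂μ := by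
  rw [← Ioc_union_Ioc_eq_Ioc hs hst] at hf ⊢
  rw [setIntegral_union (Ioc_disjoint_Ioc_of_le le_rfl) measurableSet_Ioc
    (hf.mono_set subset_union_left) (hf.mono_set subset_union_right)]
  ring

lemma withDensity_ofReal_apply {μ : Measure ℝ} {f : ℝ → ℝ} (hf : ∀ u, 0 ≤ f u) {S : Set ℝ}
    (hS : MeasurableSet S) (hfS : IntegrableOn f S μ) :
    μ.withDensity (fun u => ENNReal.ofReal (f u)) S = ENNReal.ofReal (∫ u in S, f u ∂μ) := by
  rw [withDensity_apply _ hS, ofReal_integral_eq_lintegral_ofReal hfS (ae_of_all _ hf)]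

lemma setIntegral_Ioc_sub_le_withDensity {μ : Measure ℝ} {f : ℝ → ℝ} (hf : ∀ u, 0 ≤ f u)
    {s t : ℝ} (hs : 0 ≤ s) (hst : s ≤ t) {D : Set ℝ}
    (hD : IntegrableOn f (Ioc 0 t) μ → Ioc 0 t ⊆ D) :
    ∫ u in Ioc 0 t, f u ∂μ - ∫ u in Ioc 0 s, f u ∂μ ≤
      (μ.withDensity fun u => ENNReal.ofReal (f u)).real (Ioc s t ∩ D) := by
  by_cases hft : IntegrableOn f (Ioc 0 t) μ
  · have hfst : IntegrableOn f (Ioc s t) μ := hft.mono_set (Ioc_subset_Ioc_left hs)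
    rw [inter_eq_left.2 ((Ioc_subset_Ioc_left hs).trans (hD hft)), measureReal_def,
      withDensity_ofReal_apply hf measurableSet_Ioc hfst,
      ENNReal.toReal_ofReal (setIntegral_nonneg measurableSet_Ioc fun u _ => hf u),
      setIntegral_Ioc_sub_setIntegral_Ioc hs hst hft]
  · rw [integral_undef hft, zero_sub]
    exact (neg_nonpos.2 (setIntegral_nonneg measurableSet_Ioc fun u _ => hf u)).trans
      measureReal_nonneg

def compensator (μ : Measure ℝ) (lam : ℝ → Ω → ℝ) (t : ℝ) (ω : Ω) : ℝ :=
  ∫ s in Ioc 0 t, lam s ω ∂μ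

def timeIn (R : Ω → ℝ≥0∞) (S : Set ℝ) : Set Ω := {ω | R ω < ⊤ ∧ (R ω).toReal ∈ S}

lemma timeIn_Ioc {R : Ω → ℝ≥0∞} {s t : ℝ} (hs : 0 ≤ s) (hst : s ≤ t) :
    timeIn R (Ioc s t) = {ω | R ω ≤ ENNReal.ofReal t} \ {ω | R ω ≤ ENNReal.ofReal s} := by
  ext ω
  simp only [timeIn, mem_Ioc, Set.mem_sdiff, Set.mem_ofPred, not_le]
  constructor
  · rintro ⟨htop, hs', ht'⟩
    exact ⟨(ENNReal.le_ofReal_iff_toReal_le htop.ne (hs.trans hst)).2 ht',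
      (ENNReal.ofReal_lt_iff_lt_toReal hs htop.ne).2 hs'⟩
  · rintro ⟨ht', hs'⟩
    have htop : R ω < ⊤ := ht'.trans_lt ENNReal.ofReal_lt_top
    exact ⟨htop, (ENNReal.ofReal_lt_iff_lt_toReal hs htop.ne).1 hs',
      (ENNReal.le_ofReal_iff_toReal_le htop.ne (hs.trans hst)).1 ht'⟩

lemma stInd_sub_stInd [MeasurableSpace Ω] {R : Ω → ℝ≥0∞} {s t : ℝ} (hs : 0 ≤ s)
    (hst : s ≤ t) :
    stInd R t - stInd R s = (timeIn R (Ioc s t)).indicator fun _ => 1 := by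
  have hsub : {ω | R ω ≤ ENNReal.ofReal s} ⊆ {ω | R ω ≤ ENNReal.ofReal t} :=
    fun ω hω => le_trans hω (ENNReal.ofReal_le_ofReal hst)
  rw [timeIn_Ioc hs hst, indicator_sdiff hsub]
  rfl

def finiteLaw [MeasurableSpace Ω] (P : Measure Ω) (R : Ω → ℝ≥0∞) : Measure ℝ :=
  (P.restrict {ω | R ω < ⊤}).map fun ω => (R ω).toReal

lemma finiteLaw_apply [MeasurableSpace Ω] {P : Measure Ω} {R : Ω → ℝ≥0∞} (hR : Measurable R)
    {S : Set ℝ} (hS : MeasurableSet S) : finiteLaw P R S = P (timeIn R S) := by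
  have hR' : Measurable fun ω => (R ω).toReal := ENNReal.measurable_toReal.comp hR
  rw [finiteLaw, Measure.map_apply hR' hS, Measure.restrict_apply (hR' hS), inter_comm]
  rfl

lemma finiteLaw_real_apply [MeasurableSpace Ω] {P : Measure Ω} {R : Ω → ℝ≥0∞}
    (hR : Measurable R) {S : Set ℝ} (hS : MeasurableSet S) :
    (finiteLaw P R).real S = P.real (timeIn R S) := by
  rw [measureReal_def, finiteLaw_apply hR hS, measureReal_def]

instance [MeasurableSpace Ω] {P : Measure Ω} [IsFiniteMeasure P] {R : Ω → ℝ≥0∞} :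
    IsFiniteMeasure (finiteLaw P R) := by
  unfold finiteLaw; infer_instance

structure IsIntensity [MeasurableSpace Ω] (P : Measure Ω) (G : ℝ → MeasurableSpace Ω)
    (R : Ω → ℝ≥0∞) (μ : Measure ℝ) (lam : ℝ → Ω → ℝ) : Prop where
  isFiltrationFam : IsFiltrationFam G
  isStoppingTimeE : IsStoppingTimeE G R
  nonneg : ∀ s ω, 0 ≤ lam s ω
  isMartingaleFam : IsMartingaleFam P G fun t ω => stInd R t ω - compensator μ lam t ω

def IsFiltrationFam.toFiltration [m : MeasurableSpace Ω] {G : ℝ → MeasurableSpace Ω}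
    (hG : IsFiltrationFam G) {τ : ℕ → ℝ} (hτ : Monotone τ) : Filtration ℕ m :=
  ⟨fun n => G (τ n), fun _ _ hij => hG.1 (hτ hij), fun n => hG.2 (τ n)⟩

def gridBelow (g : ℝ → Ω → ℝ) (N : ℕ) (M : ℝ) (i : ℕ) : Set Ω :=
  ⋂ k ≤ i, {ω | g (dyadic N k) ω ≤ M}

def cellSum (g : ℝ → Ω → ℝ) (N : ℕ) (M : ℝ) (Λ : Finset ℕ) (ω : Ω) : ℝ :=
  ∑ l ∈ Λ, (gridBelow g N M (l + 1)).indicator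
    (fun ω => g (dyadic N (l + 1)) ω - g (dyadic N l) ω) ω

lemma gridBelow_anti (g : ℝ → Ω → ℝ) (N : ℕ) (M : ℝ) : Antitone (gridBelow g N M) :=
  fun _ _ hij => biInter_mono (fun _ hk => le_trans hk hij) fun _ _ => subset_rfl

def pathMeasure (μ : Measure ℝ) (lam : ℝ → Ω → ℝ) (ω : Ω) : Measure ℝ :=
  μ.withDensity fun u => ENNReal.ofReal (lam u ω)

lemma cellSum_le_pathMeasure {μ : Measure ℝ} {lam : ℝ → Ω → ℝ} {ω : Ω}
    (hlam : ∀ s, 0 ≤ lam s ω) (U : Set ℝ) (b N : ℕ) (M : ℝ) :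
    cellSum (compensator μ lam) N M (innerCellIdx U b N) ω ≤ (pathMeasure μ lam ω).real
      (U ∩ dyadicSublevel (pathMeasure μ lam ω) (ENNReal.ofReal M)) := by
  set ρ := pathMeasure μ lam ω
  set D := dyadicSublevel ρ (ENNReal.ofReal M)
  have hD : ρ D ≠ ⊤ := ((measure_dyadicSublevel_le ρ _).trans_lt ENNReal.ofReal_lt_top).ne
  have hterm : ∀ l ∈ innerCellIdx U b N, (gridBelow (compensator μ lam) N M (l + 1)).indicator
      (fun ω => compensator μ lam (dyadic N (l + 1)) ω - compensator μ lam (dyadic N l) ω) ω ≤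
        ρ.real (dyadicCell N l ∩ D) := by
    intro l _
    by_cases hω : ω ∈ gridBelow (compensator μ lam) N M (l + 1)
    · rw [indicator_of_mem hω]
      refine setIntegral_Ioc_sub_le_withDensity hlam (dyadic_nonneg N l)
        (dyadic_mono N l.le_succ) fun hint => Ioc_subset_dyadicSublevel ?_
      exact (withDensity_ofReal_apply hlam measurableSet_Ioc hint).trans_le
        (ENNReal.ofReal_le_ofReal (mem_iInter₂.1 hω (l + 1) le_rfl))
    · rw [indicator_of_notMem hω]
      exact measureReal_nonneg
  have hfin : ∀ S, ρ (S ∩ D) ≠ ⊤ := fun S =>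
    ne_top_of_le_ne_top hD (measure_mono inter_subset_right)
  calc cellSum (compensator μ lam) N M (innerCellIdx U b N) ω
      ≤ ∑ l ∈ innerCellIdx U b N, ρ.real (dyadicCell N l ∩ D) := Finset.sum_le_sum hterm
    _ = ρ.real (⋃ l ∈ innerCellIdx U b N, dyadicCell N l ∩ D) :=
      (measureReal_biUnion_finset (fun l _ l' _ hne =>
        ((pairwise_disjoint_dyadicCell N hne).mono inter_subset_left inter_subset_left))
        (fun _ _ => measurableSet_Ioc.inter (measurableSet_dyadicSublevel ρ _))
        fun _ _ => hfin _).symm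
    _ ≤ ρ.real (U ∩ D) := measureReal_mono (iUnion₂_subset fun l hl =>
        inter_subset_inter_left _ (mem_innerCellIdx.1 hl).2) (hfin U)

namespace IsIntensity

variable [MeasurableSpace Ω] {P : Measure Ω} {G : ℝ → MeasurableSpace Ω} {R : Ω → ℝ≥0∞}
  {μ : Measure ℝ} {lam : ℝ → Ω → ℝ}

lemma compensator_nonneg (h : IsIntensity P G R μ lam) (t : ℝ) (ω : Ω) :
    0 ≤ compensator μ lam t ω :=
  integral_nonneg fun s => h.nonneg s ω

lemma measurable_stInd (h : IsIntensity P G R μ lam) (t : ℝ) : Measurable[G t] (stInd R t) :=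
  measurable_const.indicator (h.isStoppingTimeE t)

lemma measurable_compensator (h : IsIntensity P G R μ lam) (t : ℝ) :
    Measurable[G t] (compensator μ lam t) := by
  rw [show compensator μ lam t = stInd R t - fun ω => stInd R t ω - compensator μ lam t ω by
    ext ω; simp]
  exact (h.measurable_stInd t).sub (h.isMartingaleFam.1 t)

lemma measurableSet_timeIn_Ioc (h : IsIntensity P G R μ lam) {s t : ℝ} (hs : 0 ≤ s)
    (hst : s ≤ t) : MeasurableSet[G t] (timeIn R (Ioc s t)) := by
  rw [timeIn_Ioc hs hst]
  exact (h.isStoppingTimeE t).diff (h.isFiltrationFam.1 hst _ (h.isStoppingTimeE s))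

lemma measurableSet_gridBelow (h : IsIntensity P G R μ lam) (N : ℕ) (M : ℝ) (i : ℕ) :
    MeasurableSet[G (dyadic N i)] (gridBelow (compensator μ lam) N M i) :=
  .iInter fun _ => .iInter fun hk =>
    h.isFiltrationFam.1 (dyadic_mono N hk) _ (h.measurable_compensator _ measurableSet_Iic)

variable [IsFiniteMeasure P]

lemma integrable_stInd (h : IsIntensity P G R μ lam) (t : ℝ) : Integrable (stInd R t) P :=
  (integrable_const 1).indicator (h.isFiltrationFam.2 t _ (h.isStoppingTimeE t))

lemma integrable_compensator (h : IsIntensity P G R μ lam) (t : ℝ) :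
    Integrable (compensator μ lam t) P := by
  rw [show compensator μ lam t = stInd R t - fun ω => stInd R t ω - compensator μ lam t ω by
    ext ω; simp]
  exact (h.integrable_stInd t).sub (h.isMartingaleFam.2.1 t)

lemma setIntegral_compensator_sub (h : IsIntensity P G R μ lam) {s t : ℝ} (hs : 0 ≤ s)
    (hst : s ≤ t) {A : Set Ω} (hA : MeasurableSet[G s] A) :
    ∫ ω in A, compensator μ lam t ω ∂P - ∫ ω in A, compensator μ lam s ω ∂P =
      P.real (A ∩ timeIn R (Ioc s t)) := by
  have hAm := h.isFiltrationFam.2 s A hA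
  have hmart : ∫ ω in A, (stInd R t ω - compensator μ lam t ω) ∂P =
      ∫ ω in A, (stInd R s ω - compensator μ lam s ω) ∂P := by
    rw [← setIntegral_condExp (h.isFiltrationFam.2 s) (h.isMartingaleFam.2.1 t) hA]
    exact setIntegral_congr_ae hAm ((h.isMartingaleFam.2.2 s t hs hst).mono fun ω hω _ => hω)
  have hjump : ∫ ω in A, stInd R t ω ∂P - ∫ ω in A, stInd R s ω ∂P =
      P.real (A ∩ timeIn R (Ioc s t)) := by
    rw [← integral_sub (h.integrable_stInd t).integrableOn (h.integrable_stInd s).integrableOn]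
    simp_rw [← Pi.sub_apply (stInd R t), stInd_sub_stInd hs hst]
    rw [setIntegral_indicator (h.isFiltrationFam.2 t _ (h.measurableSet_timeIn_Ioc hs hst)),
      setIntegral_const, smul_eq_mul, mul_one]
  rw [integral_sub (h.integrable_stInd t).integrableOn (h.integrable_compensator t).integrableOn,
    integral_sub (h.integrable_stInd s).integrableOn (h.integrable_compensator s).integrableOn]
    at hmart
  linarith

lemma setIntegral_compensator_mono (h : IsIntensity P G R μ lam) {s t : ℝ} (hs : 0 ≤ s)
    (hst : s ≤ t) {A : Set Ω} (hA : MeasurableSet[G s] A) :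
    ∫ ω in A, compensator μ lam s ω ∂P ≤ ∫ ω in A, compensator μ lam t ω ∂P := by
  linarith [h.setIntegral_compensator_sub hs hst hA, measureReal_nonneg (μ := P)
    (s := A ∩ timeIn R (Ioc s t))]

lemma submartingale_compensator (h : IsIntensity P G R μ lam) {τ : ℕ → ℝ} (hτ : Monotone τ)
    (hτ0 : ∀ n, 0 ≤ τ n) :
    Submartingale (fun n => compensator μ lam (τ n)) (h.isFiltrationFam.toFiltration hτ) P :=
  submartingale_of_setIntegral_le (fun n => (h.measurable_compensator (τ n)).stronglyMeasurable)
    (fun n => h.integrable_compensator (τ n))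
    fun _ _ hij _ hA => h.setIntegral_compensator_mono (hτ0 _) (hτ hij) hA

lemma measureReal_compl_gridBelow_le (h : IsIntensity P G R μ lam) (N K : ℕ) {M : ℝ}
    (hM : 0 < M) :
    P.real (gridBelow (compensator μ lam) N M K)ᶜ ≤
      (∫ ω, compensator μ lam (dyadic N K) ω ∂P) / M := by
  set S := {ω | M ≤ (Finset.range (K + 1)).sup' Finset.nonempty_range_add_one
    fun k => compensator μ lam (dyadic N k) ω}
  have hdoob := maximal_ineq (h.submartingale_compensator (dyadic_mono N) (dyadic_nonneg N))
    (fun _ ω => h.compensator_nonneg _ ω) (ε := ⟨M, hM.le⟩) K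
  have hsub : (gridBelow (compensator μ lam) N M K)ᶜ ⊆ S := by
    intro ω hω
    simp only [gridBelow, mem_compl_iff, mem_iInter, not_forall, Set.mem_ofPred, not_le] at hω
    obtain ⟨k, hk, hlt⟩ := hω
    exact Finset.le_sup'_of_le (fun k => compensator μ lam (dyadic N k) ω)
      (Finset.mem_range.2 (Nat.lt_succ_of_le hk)) hlt.le
  have hS : M * P.real S ≤ ∫ ω in S, compensator μ lam (dyadic N K) ω ∂P := by
    have := ENNReal.toReal_mono ENNReal.ofReal_ne_top hdoob
    rwa [ENNReal.toReal_mul,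
      ENNReal.toReal_ofReal (integral_nonneg fun ω => h.compensator_nonneg _ ω)] at this
  calc P.real (gridBelow (compensator μ lam) N M K)ᶜ ≤ P.real S := measureReal_mono hsub
    _ ≤ (∫ ω in S, compensator μ lam (dyadic N K) ω ∂P) / M := by
      rw [le_div_iff₀ hM]; linarith
    _ ≤ (∫ ω, compensator μ lam (dyadic N K) ω ∂P) / M :=
      div_le_div_of_nonneg_right (setIntegral_le_integral (h.integrable_compensator _)
        (ae_of_all _ fun ω => h.compensator_nonneg _ ω)) hM.le

lemma measureReal_inter_timeIn_le (h : IsIntensity P G R μ lam) {s t u : ℝ} (hs : 0 ≤ s)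
    (hst : s ≤ t) (htu : t ≤ u) {A B : Set Ω} (hA : MeasurableSet[G s] A)
    (hB : MeasurableSet[G t] B) (hBA : B ⊆ A) :
    P.real (A ∩ timeIn R (Ioc s t)) ≤
      ∫ ω, B.indicator (fun ω => compensator μ lam t ω - compensator μ lam s ω) ω ∂P +
        ∫ ω in A \ B, compensator μ lam u ω ∂P := by
  have hAm := h.isFiltrationFam.2 s A hA
  have hBm := h.isFiltrationFam.2 t B hB
  have hint : Integrable (fun ω => compensator μ lam t ω - compensator μ lam s ω) P :=
    (h.integrable_compensator t).sub (h.integrable_compensator s)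
  rw [← h.setIntegral_compensator_sub hs hst hA, ← integral_sub
    (h.integrable_compensator t).integrableOn (h.integrable_compensator s).integrableOn,
    ← integral_inter_add_sdiff hBm hint.integrableOn, inter_eq_right.2 hBA,
    integral_indicator hBm]
  gcongr ?_ + ?_
  · exact le_rfl
  calc ∫ ω in A \ B, (compensator μ lam t ω - compensator μ lam s ω) ∂P
      ≤ ∫ ω in A \ B, compensator μ lam t ω ∂P :=
        setIntegral_mono_on hint.integrableOn (h.integrable_compensator t).integrableOn
          (hAm.diff hBm) fun ω _ => sub_le_self _ (h.compensator_nonneg s ω)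
    _ ≤ ∫ ω in A \ B, compensator μ lam u ω ∂P :=
        h.setIntegral_compensator_mono (hs.trans hst) htu
          ((h.isFiltrationFam.1 hst _ hA).diff hB)

lemma integrable_cellSum (h : IsIntensity P G R μ lam) (N : ℕ) (M : ℝ) (Λ : Finset ℕ) :
    Integrable (cellSum (compensator μ lam) N M Λ) P :=
  integrable_finsetSum _ fun l _ =>
    ((h.integrable_compensator _).sub (h.integrable_compensator _)).indicator
      (h.isFiltrationFam.2 _ _ (h.measurableSet_gridBelow N M (l + 1)))

lemma measureReal_timeIn_innerCells_le (h : IsIntensity P G R μ lam) (U : Set ℝ) (b N : ℕ)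
    (M : ℝ) :
    P.real (timeIn R (innerCells U b N)) ≤
      P.real (gridBelow (compensator μ lam) N M (b * 2 ^ N))ᶜ +
        ∫ ω in (gridBelow (compensator μ lam) N M (b * 2 ^ N))ᶜ, compensator μ lam b ω ∂P +
          ∫ ω, cellSum (compensator μ lam) N M (innerCellIdx U b N) ω ∂P := by
  set g := compensator μ lam
  set H := gridBelow g N M
  set Λ := innerCellIdx U b N
  have hΛ : ∀ l ∈ Λ, l < b * 2 ^ N := fun l hl => (mem_innerCellIdx.1 hl).1
  have hHm : ∀ i, MeasurableSet (H i) := fun i =>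
    h.isFiltrationFam.2 _ _ (h.measurableSet_gridBelow N M i)
  have hcover : timeIn R (innerCells U b N) ⊆
      (H (b * 2 ^ N))ᶜ ∪ ⋃ l ∈ Λ, H l ∩ timeIn R (dyadicCell N l) := by
    rintro ω ⟨htop, hω⟩
    obtain ⟨l, hl, hωl⟩ := mem_iUnion₂.1 hω
    by_cases hK : ω ∈ H (b * 2 ^ N)
    · exact Or.inr (mem_iUnion₂.2 ⟨l, hl, gridBelow_anti g N M (hΛ l hl).le hK, htop, hωl⟩)
    · exact Or.inl hK
  have hcell : ∀ l ∈ Λ, P.real (H l ∩ timeIn R (dyadicCell N l)) ≤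
      ∫ ω, (H (l + 1)).indicator (fun ω => g (dyadic N (l + 1)) ω - g (dyadic N l) ω) ω ∂P +
        ∫ ω in H l \ H (l + 1), g b ω ∂P := fun l hl => by
    rw [← dyadic_mul_two_pow N b]
    exact h.measureReal_inter_timeIn_le (dyadic_nonneg N l) (dyadic_mono N l.le_succ)
      (dyadic_mono N (hΛ l hl)) (h.measurableSet_gridBelow N M l)
      (h.measurableSet_gridBelow N M (l + 1)) (gridBelow_anti g N M l.le_succ)
  have hexit_disj : ∀ {l l' : ℕ}, l < l' → Disjoint (H l \ H (l + 1)) (H l' \ H (l' + 1)) :=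
    fun hlt => disjoint_left.2 fun ω hω hω' => hω.2 (gridBelow_anti g N M hlt hω'.1)
  have hexit :
      ∑ l ∈ Λ, ∫ ω in H l \ H (l + 1), g b ω ∂P ≤ ∫ ω in (H (b * 2 ^ N))ᶜ, g b ω ∂P := by
    rw [← integral_biUnion_finset Λ (fun l _ => (hHm l).diff (hHm (l + 1)))
      (fun l _ l' _ hne => (lt_or_gt_of_ne hne).elim hexit_disj fun hlt =>
        (hexit_disj hlt).symm)
      fun l _ => (h.integrable_compensator b).integrableOn]
    refine setIntegral_mono_set (h.integrable_compensator b).integrableOn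
      (ae_of_all _ fun ω => h.compensator_nonneg b ω) (LE.le.eventuallyLE ?_)
    exact iUnion₂_subset fun l hl ω hω hK => hω.2 (gridBelow_anti g N M (hΛ l hl) hK)
  calc P.real (timeIn R (innerCells U b N))
      ≤ P.real (H (b * 2 ^ N))ᶜ + ∑ l ∈ Λ, P.real (H l ∩ timeIn R (dyadicCell N l)) :=
        (measureReal_mono hcover).trans ((measureReal_union_le _ _).trans
          (add_le_add le_rfl (measureReal_biUnion_finset_le _ _)))
    _ ≤ P.real (H (b * 2 ^ N))ᶜ + ∑ l ∈ Λ,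
        (∫ ω, (H (l + 1)).indicator (fun ω => g (dyadic N (l + 1)) ω - g (dyadic N l) ω) ω ∂P +
          ∫ ω in H l \ H (l + 1), g b ω ∂P) := by gcongr with l hl; exact hcell l hl
    _ ≤ _ := by
      unfold cellSum
      rw [Finset.sum_add_distrib, integral_finsetSum]
      · linarith
      · exact fun l _ =>
          ((h.integrable_compensator _).sub (h.integrable_compensator _)).indicator (hHm _)

lemma tendsto_integral_max_cellSum (h : IsIntensity P G R μ lam) {U : ℕ → Set ℝ}
    (hU : Antitone U) (hUm : ∀ j, MeasurableSet (U j)) (hU0 : μ (⋂ j, U j) = 0) (b : ℕ)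
    (N : ℕ → ℕ) {M : ℝ} (hM : 0 ≤ M) :
    Tendsto (fun j => ∫ ω, max (cellSum (compensator μ lam) (N j) M
      (innerCellIdx (U j) b (N j)) ω) 0 ∂P) atTop (𝓝 0) := by
  set D := fun ω => dyadicSublevel (pathMeasure μ lam ω) (ENNReal.ofReal M)
  have hle : ∀ j ω, max (cellSum (compensator μ lam) (N j) M (innerCellIdx (U j) b (N j)) ω) 0 ≤
      (pathMeasure μ lam ω).real (U j ∩ D ω) := fun j ω =>
    max_le (cellSum_le_pathMeasure (fun s => h.nonneg s ω) _ _ _ _) measureReal_nonneg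
  have hbound : ∀ j ω, ‖max (cellSum (compensator μ lam) (N j) M
      (innerCellIdx (U j) b (N j)) ω) 0‖ ≤ M := fun j ω => by
    rw [Real.norm_of_nonneg (le_max_right _ _)]
    exact (hle j ω).trans (ENNReal.toReal_le_of_le_ofReal hM
      ((measure_mono inter_subset_right).trans (measure_dyadicSublevel_le _ _)))
  have hlim : ∀ ω, Tendsto (fun j => (pathMeasure μ lam ω).real (U j ∩ D ω)) atTop (𝓝 0) :=
    fun ω => tendsto_measureReal_inter_of_absolutelyContinuous
      (withDensity_absolutelyContinuous _ _)
      ((measure_dyadicSublevel_le _ _).trans_lt ENNReal.ofReal_lt_top).ne hU hUm hU0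
  simpa using tendsto_integral_of_dominated_convergence (fun _ => M)
    (fun j => (h.integrable_cellSum _ _ _).pos_part.aestronglyMeasurable) (integrable_const M)
    (fun j => ae_of_all _ (hbound j)) (ae_of_all _ fun ω =>
      squeeze_zero (fun j => le_max_right _ 0) (fun j => hle j ω) (hlim ω))

lemma exists_finiteLaw_real_le (h : IsIntensity P G R μ lam) (hR : Measurable R)
    [μ.OuterRegular] {A : Set ℝ} (hA : μ A = 0) {b : ℕ} (hAb : A ⊆ Ioc 0 (b : ℝ)) {M : ℝ}
    (hM : 0 ≤ M) {ε : ℝ} (hε : 0 < ε) :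
    ∃ N, (finiteLaw P R).real A ≤ P.real (gridBelow (compensator μ lam) N M (b * 2 ^ N))ᶜ +
      ∫ ω in (gridBelow (compensator μ lam) N M (b * 2 ^ N))ᶜ, compensator μ lam b ω ∂P + ε := by
  obtain ⟨U, hU_anti, hU_open, hAU, hU0⟩ := exists_antitone_isOpen_superset hA
  choose N hN using fun j : ℕ => exists_measureReal_le_innerCells (ν := finiteLaw P R)
    (hU_open j) (subset_inter (hAU j) hAb) (Nat.one_div_pos_of_nat (n := j))
  have hlim := (h.tendsto_integral_max_cellSum hU_anti (fun j => (hU_open j).measurableSet) hU0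
    b N hM).add tendsto_one_div_add_atTop_nhds_zero_nat
  rw [add_zero] at hlim
  obtain ⟨j, hj⟩ := (hlim.eventually (gt_mem_nhds hε)).exists
  have hcells := hN j
  rw [finiteLaw_real_apply hR (measurableSet_innerCells _ _ _)] at hcells
  have hpos := integral_mono (h.integrable_cellSum _ M _) (h.integrable_cellSum _ M _).pos_part
    fun ω => le_max_left (cellSum (compensator μ lam) (N j) M (innerCellIdx (U j) b (N j)) ω) 0
  exact ⟨N j, by linarith [h.measureReal_timeIn_innerCells_le (U j) b (N j) M]⟩

lemma finiteLaw_eq_zero_of_subset_Ioc (h : IsIntensity P G R μ lam) (hR : Measurable R)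
    [μ.OuterRegular] {A : Set ℝ} (hA : μ A = 0) {b : ℕ} (hAb : A ⊆ Ioc 0 (b : ℝ)) :
    finiteLaw P R A = 0 := by
  refine (measureReal_eq_zero_iff).1 (le_antisymm ?_ measureReal_nonneg)
  refine nonpos_of_forall_le_measureReal_add_setIntegral (h.integrable_compensator b)
    fun δ hδ => ?_
  set C := ∫ ω, compensator μ lam b ω ∂P
  have hC : 0 ≤ C := integral_nonneg fun ω => h.compensator_nonneg b ω
  have hM : 0 < (C + 1) / δ := by positivity
  obtain ⟨N, hN⟩ := h.exists_finiteLaw_real_le hR hA hAb hM.le hδ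
  refine ⟨_, ?_, hN⟩
  calc _ ≤ (∫ ω, compensator μ lam (dyadic N (b * 2 ^ N)) ω ∂P) / ((C + 1) / δ) :=
        h.measureReal_compl_gridBelow_le _ _ hM
    _ ≤ δ := by
      rw [dyadic_mul_two_pow, div_le_iff₀ hM, mul_div_cancel₀ _ hδ.ne']
      linarith

theorem finiteLaw_absolutelyContinuous (h : IsIntensity P G R μ lam) (hR : Measurable R)
    [μ.OuterRegular] (hR0 : P {ω | R ω = 0} = 0) : finiteLaw P R ≪ μ := by
  intro A hA
  have hnonpos : finiteLaw P R (Iic 0) = 0 := by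
    rw [finiteLaw_apply hR measurableSet_Iic]
    refine measure_mono_null (fun ω ⟨htop, hω⟩ => ?_) hR0
    exact ((ENNReal.toReal_eq_zero_iff _).1 (le_antisymm hω ENNReal.toReal_nonneg)).resolve_right
      htop.ne
  have hcover : A ⊆ Iic 0 ∪ ⋃ b : ℕ, A ∩ Ioc 0 (b : ℝ) := fun x hx =>
    (le_or_gt x 0).imp id fun hx0 => mem_iUnion.2 ⟨⌈x⌉₊, hx, hx0, Nat.le_ceil x⟩
  exact measure_mono_null hcover (measure_union_null hnonpos (measure_iUnion_null fun b =>
    h.finiteLaw_eq_zero_of_subset_Ioc hR (measure_mono_null inter_subset_left hA)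
      inter_subset_right))

end IsIntensity

lemma isPredictableST_zero [MeasurableSpace Ω] (G : ℝ → MeasurableSpace Ω) :
    IsPredictableST G fun _ => 0 := by
  have hzero : IsStoppingTimeE G fun _ => 0 := fun t => by simp
  exact ⟨hzero, fun _ => 0, fun _ => hzero, fun _ =>
    ⟨monotone_const, tendsto_const_nhds, fun _ h0 => absurd h0 (lt_irrefl 0)⟩⟩

lemma IsTotallyInaccessible.measure_eq_zero [MeasurableSpace Ω] {P : Measure Ω}
    {G : ℝ → MeasurableSpace Ω} {R : Ω → ℝ≥0∞} (hR : IsTotallyInaccessible P G R) :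
    P {ω | R ω = 0} = 0 := by
  refine measure_mono_null (fun ω (h0 : R ω = 0) => ?_) (hR.2 _ (isPredictableST_zero G))
  exact ⟨h0, h0.trans_lt ENNReal.zero_lt_top⟩

theorem stmt2_general [m : MeasurableSpace Ω] (P : Measure Ω) [IsProbabilityMeasure P]
    (G : ℝ → MeasurableSpace Ω) (hG : IsFiltrationFam G)
    (R : Ω → ℝ≥0∞) (hRmeas : Measurable R)
    (hti : IsTotallyInaccessible P G R)
    (c : StieltjesFunction ℝ)
    (lam : ℝ → Ω → ℝ) (hlam0 : ∀ s ω, 0 ≤ lam s ω)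
    (hcomp : IsMartingaleFam P G
      (fun t ω => stInd R t ω - ∫ s in Ioc (0:ℝ) t, lam s ω ∂c.measure)) :
    Measure.map (fun ω => (R ω).toReal) (P.restrict {ω | R ω < ⊤}) ≪ c.measure ∧
    (c.measure = (volume : Measure ℝ) →
      Measure.map (fun ω => (R ω).toReal) (P.restrict {ω | R ω < ⊤}) ≪ (volume : Measure ℝ)) ∧
    (c.measure ⟂ₘ (volume : Measure ℝ) →
      Measure.map (fun ω => (R ω).toReal) (P.restrict {ω | R ω < ⊤}) ⟂ₘ (volume : Measure ℝ)) := by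
  have hac : finiteLaw P R ≪ c.measure :=
    IsIntensity.finiteLaw_absolutelyContinuous ⟨hG, hti.1, hlam0, hcomp⟩ hRmeas
      hti.measure_eq_zero
  exact ⟨hac, fun hc => hc ▸ hac, fun hsing => hsing.mono_ac hac .rfl⟩

/-- Corollary 2.6. If `R` is an `ℍ`-stopping time that is totally
inaccessible in a subfiltration `𝔾` with `𝔾`-compensator `∫_0^t λ_s dc(s)` (`c` deterministic,
continuous, nondecreasing), then the law `F` of `R` satisfies `dF ≪ dc`; in particular if
`dc` is Lebesgue measure then `F` is absolutely continuous, and if `dc ⟂ Leb` then `F ⟂ Leb`. -/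
theorem stmt2 [m : MeasurableSpace Ω] (P : Measure Ω) [IsProbabilityMeasure P]
    (H G : ℝ → MeasurableSpace Ω) (hH : IsFiltrationFam H) (hG : IsFiltrationFam G)
    (hGH : ∀ t, G t ≤ H t)
    (R : Ω → ℝ≥0∞) (hRmeas : Measurable R) (hRH : IsStoppingTimeE H R)
    (hti : IsTotallyInaccessible P G R)
    (c : StieltjesFunction ℝ) (hc : Continuous c)
    (lam : ℝ → Ω → ℝ) (hlam0 : ∀ s ω, 0 ≤ lam s ω) (hlamAd : AdaptedFam G lam)
    (hcomp : IsMartingaleFam P G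
      (fun t ω => stInd R t ω - ∫ s in Ioc (0:ℝ) t, lam s ω ∂c.measure)) :
    Measure.map (fun ω => (R ω).toReal) (P.restrict {ω | R ω < ⊤}) ≪ c.measure ∧
    (c.measure = (volume : Measure ℝ) →
      Measure.map (fun ω => (R ω).toReal) (P.restrict {ω | R ω < ⊤}) ≪ (volume : Measure ℝ)) ∧
    (c.measure ⟂ₘ (volume : Measure ℝ) →
      Measure.map (fun ω => (R ω).toReal) (P.restrict {ω | R ω < ⊤}) ⟂ₘ (volume : Measure ℝ)) :=
  stmt2_general (m := m) P G hG R hRmeas hti c lam hlam0 hcomp
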